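/- arXiv:1808.07309 — 3 statements merged into one kernel-verified Lean document; each statement's English description precedes it below -/
import Mathlib

section
/- (Result 1, unbiasedness of the IPW estimating function.) For every integrable real-valued measurable function g of (Y, V), E[(R/π(V)) · g(Y, V) − ((1 − R)/(1 − π(V))) · E[g(Y, V) | V, L]] = 0. -/
open MeasureTheory ProbabilityTheory Set

/-! Ignorability upgrades `E[R | V] = π(V)` to `E[R | V, Y] = π(V)` and `E[R | V, L] = π(V)`: if
`A` is conditionally independent of `m₂` given `m`, then `P⟦A | m ⊔ m₂⟧ = P⟦A | m⟧`, which only has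
to be checked on the π-system of intersections `B ∩ C` with `B ∈ m`, `C ∈ m₂`. Once
`E[R | m] = p`, weighting an `m`-measurable `f` by `R / p` leaves its mean unchanged, because
`∫ R / p * f = ∫ f / p * E[R | m] = ∫ f`. With `m = σ(V, Y)` and with `m = σ(V, L)` (weights
`(1 - R) / (1 - π(V))`), both terms of the estimating function have mean `E[g(Y, V)]`, the second
by the tower property. -/

theorem isPiSystem_image2_inter {α : Type*} (m₁ m₂ : MeasurableSpace α) :
    IsPiSystem (image2 (· ∩ ·) {s | MeasurableSet[m₁] s} {t | MeasurableSet[m₂] t}) := by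
  rintro _ ⟨s₁, hs₁, t₁, ht₁, rfl⟩ _ ⟨s₂, hs₂, t₂, ht₂, rfl⟩ -
  exact ⟨s₁ ∩ s₂, hs₁.inter hs₂, t₁ ∩ t₂, ht₁.inter ht₂, inter_inter_inter_comm ..⟩

theorem generateFrom_image2_inter {α : Type*} (m₁ m₂ : MeasurableSpace α) :
    MeasurableSpace.generateFrom
      (image2 (· ∩ ·) {s | MeasurableSet[m₁] s} {t | MeasurableSet[m₂] t}) = m₁ ⊔ m₂ := by
  refine le_antisymm (MeasurableSpace.generateFrom_le ?_) (sup_le ?_ ?_)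
  · rintro _ ⟨s, hs, t, ht, rfl⟩
    exact (le_sup_left (a := m₁) s hs).inter (le_sup_right (a := m₁) t ht)
  · intro s hs
    exact MeasurableSpace.measurableSet_generateFrom ⟨s, hs, univ, MeasurableSet.univ, inter_univ s⟩
  · intro t ht
    exact MeasurableSpace.measurableSet_generateFrom ⟨univ, MeasurableSet.univ, t, ht, univ_inter t⟩

theorem setIntegral_eq_setIntegral_of_isPiSystem {α E : Type*} [NormedAddCommGroup E]
    [NormedSpace ℝ E] {m m₀ : MeasurableSpace α} {μ : Measure α} (hm : m ≤ m₀)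
    {s : Set (Set α)} (h_eq : m = MeasurableSpace.generateFrom s) (h_inter : IsPiSystem s)
    {f g : α → E} (hf : Integrable f μ) (hg : Integrable g μ)
    (basic : ∀ t ∈ s, ∫ x in t, f x ∂μ = ∫ x in t, g x ∂μ)
    (h_univ : ∫ x, f x ∂μ = ∫ x, g x ∂μ) {t : Set α} (ht : MeasurableSet[m] t) :
    ∫ x in t, f x ∂μ = ∫ x in t, g x ∂μ := by
  induction t, ht using MeasurableSpace.induction_on_inter h_eq h_inter with
  | empty => simp
  | basic t ht => exact basic t ht
  | compl t ht h_eq =>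
    have hf' := integral_add_compl (hm t ht) hf
    have hg' := integral_add_compl (hm t ht) hg
    rw [h_eq, h_univ] at hf'
    exact add_left_cancel (hf'.trans hg'.symm)
  | iUnion t htd htm h_eq =>
    rw [integral_iUnion (fun i => hm _ (htm i)) htd hf.integrableOn,
      integral_iUnion (fun i => hm _ (htm i)) htd hg.integrableOn]
    exact tsum_congr h_eq

theorem integral_mul_condExp {Ω : Type*} {m mΩ : MeasurableSpace Ω} {μ : Measure Ω}
    (hm : m ≤ mΩ) [SigmaFinite (μ.trim hm)] {φ f : Ω → ℝ} (hφ : AEStronglyMeasurable[m] φ μ)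
    (hφf : Integrable (φ * f) μ) (hf : Integrable f μ) :
    ∫ ω, φ ω * μ[f | m] ω ∂μ = ∫ ω, φ ω * f ω ∂μ := by
  calc ∫ ω, φ ω * μ[f | m] ω ∂μ = ∫ ω, μ[φ * f | m] ω ∂μ :=
        integral_congr_ae (condExp_mul_of_aestronglyMeasurable_left hφ hφf hf).symm
    _ = ∫ ω, φ ω * f ω ∂μ := integral_condExp hm

theorem setIntegral_inter_condExp_of_condIndep {Ω : Type*} {m m₁ m₂ mΩ : MeasurableSpace Ω}
    [StandardBorelSpace Ω] {μ : Measure Ω} [IsFiniteMeasure μ] (hm : m ≤ mΩ) (hm₁ : m₁ ≤ mΩ)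
    (hm₂ : m₂ ≤ mΩ) (hind : CondIndep m m₁ m₂ hm μ) {A B C : Set Ω} (hA : MeasurableSet[m₁] A)
    (hB : MeasurableSet[m] B) (hC : MeasurableSet[m₂] C) :
    ∫ ω in B ∩ C, (μ⟦A | m⟧) ω ∂μ = ∫ ω in B ∩ C, A.indicator (fun _ => (1 : ℝ)) ω ∂μ := by
  have hA' := hm₁ A hA
  have hB' := hm B hB
  have hC' := hm₂ C hC
  have hACB := (condIndep_iff m m₁ m₂ hm hm₁ hm₂ μ).1 hind A C hA hC
  set φ := B.indicator (μ⟦A | m⟧)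
  have hφ : StronglyMeasurable[m] φ := stronglyMeasurable_condExp.indicator hB
  have h1C : Integrable (C.indicator fun _ => (1 : ℝ)) μ := (integrable_const 1).indicator hC'
  have hφC : φ * C.indicator (fun _ => (1 : ℝ)) = C.indicator φ := by
    ext ω; by_cases hω : ω ∈ C <;> simp [hω]
  calc ∫ ω in B ∩ C, (μ⟦A | m⟧) ω ∂μ = ∫ ω, φ ω * C.indicator (fun _ => (1 : ℝ)) ω ∂μ := by
        rw [show (fun ω => φ ω * C.indicator (fun _ => (1 : ℝ)) ω) = C.indicator φ from hφC,
          integral_indicator hC', setIntegral_indicator hB', inter_comm]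
    _ = ∫ ω, φ ω * (μ⟦C | m⟧) ω ∂μ := by
        refine (integral_mul_condExp hm hφ.aestronglyMeasurable ?_ h1C).symm
        rw [hφC]; exact integrable_condExp.indicator hB' |>.indicator hC'
    _ = ∫ ω in B, (μ⟦A ∩ C | m⟧) ω ∂μ := by
        rw [← integral_indicator hB']
        refine integral_congr_ae ?_
        filter_upwards [hACB] with ω hω
        by_cases hωB : ω ∈ B <;> simp [φ, hωB, hω]
    _ = ∫ ω in B, (A ∩ C).indicator (fun _ => (1 : ℝ)) ω ∂μ :=
        setIntegral_condExp hm ((integrable_const 1).indicator (hA'.inter hC')) hB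
    _ = ∫ ω in B ∩ C, A.indicator (fun _ => (1 : ℝ)) ω ∂μ := by
        rw [inter_comm A C, ← indicator_indicator, setIntegral_indicator hC']

theorem condExp_sup_ae_eq_of_condIndep {Ω : Type*} {m m₁ m₂ mΩ : MeasurableSpace Ω}
    [StandardBorelSpace Ω] {μ : Measure Ω} [IsFiniteMeasure μ] (hm : m ≤ mΩ) (hm₁ : m₁ ≤ mΩ)
    (hm₂ : m₂ ≤ mΩ) (hind : CondIndep m m₁ m₂ hm μ) {A : Set Ω} (hA : MeasurableSet[m₁] A) :
    μ⟦A | m ⊔ m₂⟧ =ᵐ[μ] μ⟦A | m⟧ := by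
  have hsup : m ⊔ m₂ ≤ mΩ := sup_le hm hm₂
  refine (ae_eq_condExp_of_forall_setIntegral_eq hsup ((integrable_const 1).indicator (hm₁ A hA))
    (fun _ _ _ => integrable_condExp.integrableOn) (fun S hS _ => ?_)
    (stronglyMeasurable_condExp.mono (le_sup_left : m ≤ m ⊔ m₂)).aestronglyMeasurable).symm
  refine setIntegral_eq_setIntegral_of_isPiSystem hsup (generateFrom_image2_inter m m₂).symm
    (isPiSystem_image2_inter m m₂) integrable_condExp ((integrable_const 1).indicator (hm₁ A hA))
    ?_ (integral_condExp hm) hS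
  rintro _ ⟨B, hB, C, hC, rfl⟩
  exact setIntegral_inter_condExp_of_condIndep hm hm₁ hm₂ hind hA hB hC

theorem condExp_prodMk_ae_eq_of_condIndepFun {Ω 𝒱 𝒲 : Type*} {mΩ : MeasurableSpace Ω}
    [StandardBorelSpace Ω] {μ : Measure Ω} [IsFiniteMeasure μ] [m𝒱 : MeasurableSpace 𝒱]
    [m𝒲 : MeasurableSpace 𝒲] {V : Ω → 𝒱} {W : Ω → 𝒲} {R : Ω → ℝ} (hV : Measurable V)
    (hW : Measurable W) (hR : Measurable R) (hR01 : ∀ ω, R ω = 0 ∨ R ω = 1)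
    (hind : CondIndepFun (MeasurableSpace.comap V m𝒱) hV.comap_le R W μ) :
    μ[R | MeasurableSpace.comap (fun ω => (V ω, W ω)) inferInstance] =ᵐ[μ]
      μ[R | MeasurableSpace.comap V m𝒱] := by
  have hR_eq : R = (R ⁻¹' {1}).indicator fun _ => 1 := by
    ext ω; rcases hR01 ω with h | h <;> simp [h]
  rw [show MeasurableSpace.comap (fun ω => (V ω, W ω)) inferInstance
      = MeasurableSpace.comap V m𝒱 ⊔ MeasurableSpace.comap W m𝒲 from
    MeasurableSpace.comap_prodMk V W, hR_eq]
  exact condExp_sup_ae_eq_of_condIndep hV.comap_le hR.comap_le hW.comap_le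
    ((condIndepFun_iff_condIndep _ _ _ _ _).1 hind) ⟨{1}, measurableSet_singleton 1, rfl⟩

theorem condExp_one_sub_ae_eq {Ω : Type*} {m mΩ : MeasurableSpace Ω} {μ : Measure Ω}
    [IsFiniteMeasure μ] (hm : m ≤ mΩ) {R : Ω → ℝ} (hR : Integrable R μ) :
    μ[fun ω => 1 - R ω | m] =ᵐ[μ] fun ω => 1 - μ[R | m] ω := by
  filter_upwards [condExp_sub (integrable_const 1) hR m] with ω h
  rwa [condExp_const hm] at h

theorem integral_div_mul_eq_integral_of_condExp_ae_eq {Ω : Type*} {m mΩ : MeasurableSpace Ω}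
    {μ : Measure Ω} (hm : m ≤ mΩ) [SigmaFinite (μ.trim hm)] {R p f : Ω → ℝ}
    (hRp : μ[R | m] =ᵐ[μ] p) (hp : ∀ᵐ ω ∂μ, p ω ≠ 0)
    (hfp : AEStronglyMeasurable[m] (fun ω => f ω / p ω) μ) (hR : Integrable R μ)
    (hint : Integrable (fun ω => R ω / p ω * f ω) μ) :
    ∫ ω, R ω / p ω * f ω ∂μ = ∫ ω, f ω ∂μ := by
  have hcomm : (fun ω => R ω / p ω * f ω) = (fun ω => f ω / p ω) * R := by
    ext ω; simp only [Pi.mul_apply]; ring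
  calc ∫ ω, R ω / p ω * f ω ∂μ = ∫ ω, f ω / p ω * μ[R | m] ω ∂μ := by
        rw [integral_mul_condExp hm hfp (hcomm ▸ hint) hR, hcomm]; rfl
    _ = ∫ ω, f ω ∂μ := by
        refine integral_congr_ae ?_
        filter_upwards [hRp, hp] with ω hRω hpω
        rw [hRω, div_mul_cancel₀ _ hpω]

theorem MeasureTheory.Integrable.div_mul_of_abs_le_one {Ω : Type*} {mΩ : MeasurableSpace Ω}
    {μ : Measure Ω} {R p f : Ω → ℝ} {δ : ℝ} (hf : Integrable f μ) (hR : AEMeasurable R μ)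
    (hp : AEMeasurable p μ) (hδ : 0 < δ) (hR1 : ∀ᵐ ω ∂μ, |R ω| ≤ 1)
    (hpδ : ∀ᵐ ω ∂μ, δ ≤ p ω) :
    Integrable (fun ω => R ω / p ω * f ω) μ := by
  refine hf.bdd_mul (c := δ⁻¹) (hR.div hp).aestronglyMeasurable ?_
  filter_upwards [hR1, hpδ] with ω hRω hpω
  rw [Real.norm_eq_abs, abs_div, abs_of_pos (hδ.trans_le hpω), inv_eq_one_div]
  exact div_le_div₀ zero_le_one hRω hδ hpω

theorem ipw_estimating_function_unbiased_general
    {Ω : Type*} {mΩ : MeasurableSpace Ω} [StandardBorelSpace Ω]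
    {P : Measure Ω} [IsProbabilityMeasure P]
    {𝒱 𝓛 𝒴 : Type*} [m𝒱 : MeasurableSpace 𝒱] [m𝓛 : MeasurableSpace 𝓛]
    [m𝒴 : MeasurableSpace 𝒴]
    (V : Ω → 𝒱) (L : Ω → 𝓛) (Y : Ω → 𝒴)
    (hV : Measurable V) (hL : Measurable L) (hY : Measurable Y)
    (R : Ω → ℝ) (hR : Measurable R) (hR01 : ∀ ω, R ω = 0 ∨ R ω = 1)
    (π : 𝒱 → ℝ) (hπ : Measurable π)
    -- `π(V)` is a version of `E[R | σ(V)]`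
    (hπV : P[R | MeasurableSpace.comap V m𝒱] =ᵐ[P] fun ω => π (V ω))
    -- positivity
    (δ : ℝ) (hδ0 : 0 < δ)
    (hpos : ∀ᵐ ω ∂P, δ ≤ π (V ω) ∧ π (V ω) ≤ 1 - δ)
    -- ignorability: `R ⟂ (Y, L) | σ(V)`
    (hign : CondIndepFun (MeasurableSpace.comap V m𝒱) (hV.comap_le) R
      (fun ω => (Y ω, L ω)) P)
    (g : 𝒴 × 𝒱 → ℝ) (hg : Measurable g)
    (hgint : Integrable (fun ω => g (Y ω, V ω)) P) :
    ∫ ω, ((R ω / π (V ω)) * g (Y ω, V ω)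
        - ((1 - R ω) / (1 - π (V ω)))
          * (P[fun ω' => g (Y ω', V ω')
              | MeasurableSpace.comap (fun ω' => (V ω', L ω')) inferInstance]) ω) ∂P
      = 0 := by
  set mVY := MeasurableSpace.comap (fun ω => (V ω, Y ω)) (inferInstance : MeasurableSpace (𝒱 × 𝒴))
  set mVL := MeasurableSpace.comap (fun ω => (V ω, L ω)) (inferInstance : MeasurableSpace (𝒱 × 𝓛))
  set h := P[fun ω' => g (Y ω', V ω') | mVL]
  have hmVL : mVL ≤ mΩ := (hV.prodMk hL).comap_le
  have hR1 : ∀ ω, |R ω| ≤ 1 ∧ |1 - R ω| ≤ 1 := fun ω => by rcases hR01 ω with h | h <;> simp [h]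
  have intR : Integrable R P :=
    (integrable_const 1).mono' hR.aestronglyMeasurable (ae_of_all _ fun ω => (hR1 ω).1)
  have hRY : P[R | mVY] =ᵐ[P] fun ω => π (V ω) :=
    (condExp_prodMk_ae_eq_of_condIndepFun hV hY hR hR01
      (hign.comp measurable_id measurable_fst)).trans hπV
  have h1RL : P[fun ω => 1 - R ω | mVL] =ᵐ[P] fun ω => 1 - π (V ω) :=
    (condExp_one_sub_ae_eq hmVL intR).trans (((condExp_prodMk_ae_eq_of_condIndepFun hV hL hR hR01
      (hign.comp measurable_id measurable_snd)).trans hπV).fun_comp (1 - ·))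
  have hπδ : ∀ᵐ ω ∂P, δ ≤ π (V ω) ∧ δ ≤ 1 - π (V ω) :=
    hpos.mono fun ω h => ⟨h.1, by linarith [h.2]⟩
  have intY : Integrable (fun ω => R ω / π (V ω) * g (Y ω, V ω)) P :=
    hgint.div_mul_of_abs_le_one hR.aemeasurable (hπ.comp hV).aemeasurable hδ0
      (ae_of_all _ fun ω => (hR1 ω).1) (hπδ.mono fun ω h => h.1)
  have intL : Integrable (fun ω => (1 - R ω) / (1 - π (V ω)) * h ω) P :=
    integrable_condExp.div_mul_of_abs_le_one (measurable_const.sub hR).aemeasurable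
      (measurable_const.sub (hπ.comp hV)).aemeasurable hδ0 (ae_of_all _ fun ω => (hR1 ω).2)
      (hπδ.mono fun ω h => h.2)
  have hgY : AEStronglyMeasurable[mVY] (fun ω => g (Y ω, V ω) / π (V ω)) P :=
    (((hg.comp measurable_swap).div (hπ.comp measurable_fst)).comp
      (comap_measurable _)).aestronglyMeasurable
  have hhL : AEStronglyMeasurable[mVL] (fun ω => h ω / (1 - π (V ω))) P :=
    (stronglyMeasurable_condExp.measurable.div (measurable_const.sub
      ((hπ.comp measurable_fst).comp (comap_measurable _)))).aestronglyMeasurable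
  rw [integral_sub intY intL,
    integral_div_mul_eq_integral_of_condExp_ae_eq (hV.prodMk hY).comap_le hRY
      (hπδ.mono fun ω h => (hδ0.trans_le h.1).ne') hgY intR intY,
    integral_div_mul_eq_integral_of_condExp_ae_eq hmVL h1RL
      (hπδ.mono fun ω h => (hδ0.trans_le h.2).ne') hhL ((integrable_const 1).sub intR) intL,
    integral_condExp hmVL, sub_self]

/-- **Result 1.** Unbiasedness of the parallel IPW estimating function:
`E[(R/π(V)) ⬝ g(Y, V) − ((1 − R)/(1 − π(V))) ⬝ E[g(Y, V) | V, L]] = 0`. -/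
theorem ipw_estimating_function_unbiased
    {Ω : Type*} {mΩ : MeasurableSpace Ω} [StandardBorelSpace Ω] [Nonempty Ω]
    {P : Measure Ω} [IsProbabilityMeasure P]
    {𝒱 𝓛 𝒴 : Type*} [m𝒱 : MeasurableSpace 𝒱] [m𝓛 : MeasurableSpace 𝓛]
    [m𝒴 : MeasurableSpace 𝒴]
    (V : Ω → 𝒱) (L : Ω → 𝓛) (Y : Ω → 𝒴)
    (hV : Measurable V) (hL : Measurable L) (hY : Measurable Y)
    (R : Ω → ℝ) (hR : Measurable R) (hR01 : ∀ ω, R ω = 0 ∨ R ω = 1)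
    (π : 𝒱 → ℝ) (hπ : Measurable π)
    -- `π(V)` is a version of `E[R | σ(V)]`
    (hπV : P[R | MeasurableSpace.comap V m𝒱] =ᵐ[P] fun ω => π (V ω))
    -- positivity
    (δ : ℝ) (hδ0 : 0 < δ) (hδhalf : δ < 1 / 2)
    (hpos : ∀ᵐ ω ∂P, δ ≤ π (V ω) ∧ π (V ω) ≤ 1 - δ)
    -- ignorability: `R ⟂ (Y, L) | σ(V)`
    (hign : CondIndepFun (MeasurableSpace.comap V m𝒱) (hV.comap_le) R
      (fun ω => (Y ω, L ω)) P)
    (g : 𝒴 × 𝒱 → ℝ) (hg : Measurable g)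
    (hgint : Integrable (fun ω => g (Y ω, V ω)) P) :
    ∫ ω, ((R ω / π (V ω)) * g (Y ω, V ω)
        - ((1 - R ω) / (1 - π (V ω)))
          * (P[fun ω' => g (Y ω', V ω')
              | MeasurableSpace.comap (fun ω' => (V ω', L ω')) inferInstance]) ω) ∂P
      = 0 :=
  ipw_estimating_function_unbiased_general (mΩ := mΩ) (m𝒱 := m𝒱) (m𝓛 := m𝓛) (m𝒴 := m𝒴) V L Y hV hL
    hY R hR hR01 π hπ hπV δ hδ0 hpos hign g hg hgint
end

section
/- (Corollary 1, unbiasedness of the imputation-based estimating function.) For every integrable real-valued measurable function g of (Y, V), E[R · (g(Y, V) − E[g(Y, V) | V]) + (1 − R) · (E[g(Y, V) | V] − E[g(Y, V) | V, L])] = 0. -/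
open MeasureTheory ProbabilityTheory

/-! Ignorability gives `E[R | V, Y, L] = E[R | V]`: on a rectangle `{V ∈ A} ∩ {(Y, L) ∈ B}` both
sides integrate to the same thing because `E[1_{R = 1} 1_B | V] = E[R | V] E[1_B | V]`, and such
rectangles form a π-system generating `σ(V, Y, L)`. Both residuals in the estimating function are
`σ(V, Y, L)`-measurable, so `R` may be replaced by `e := E[R | V]` under the expectation. The
result `E[e (g - E[g | V]) + (1 - e) (E[g | V] - E[g | V, L])]` vanishes because `e` is
`σ(V)`-measurable and `1 - e` is `σ(V, L)`-measurable, so each is orthogonal to the matching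
residual `g - E[g | ·]`. -/

section CondExp

variable {Ω : Type*} {m mΩ : MeasurableSpace Ω} {μ : Measure Ω}

theorem setIntegral_eq_of_isPiSystem {E : Type*} [NormedAddCommGroup E] [NormedSpace ℝ E]
    [CompleteSpace E] (hm : m ≤ mΩ) {S : Set (Set Ω)} (h_gen : m = MeasurableSpace.generateFrom S)
    (h_pi : IsPiSystem S) {f g : Ω → E} (hf : Integrable f μ) (hg : Integrable g μ)
    (h_univ : ∫ ω, f ω ∂μ = ∫ ω, g ω ∂μ)
    (h_basic : ∀ t ∈ S, ∫ ω in t, f ω ∂μ = ∫ ω in t, g ω ∂μ) {t : Set Ω}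
    (ht : MeasurableSet[m] t) : ∫ ω in t, f ω ∂μ = ∫ ω in t, g ω ∂μ := by
  induction t, ht using MeasurableSpace.induction_on_inter h_gen h_pi with
  | empty => simp
  | basic t ht => exact h_basic t ht
  | compl t ht ih =>
    rw [setIntegral_compl (hm t ht) hf, setIntegral_compl (hm t ht) hg, h_univ, ih]
  | iUnion s hdisj hs ih =>
    rw [integral_iUnion (fun i => hm _ (hs i)) hdisj hf.integrableOn,
      integral_iUnion (fun i => hm _ (hs i)) hdisj hg.integrableOn]
    exact tsum_congr ih

theorem setIntegral_mul_condExp_of_stronglyMeasurable (hm : m ≤ mΩ) [SigmaFinite (μ.trim hm)]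
    {f g : Ω → ℝ} (hf : StronglyMeasurable[m] f) (hfg : Integrable (f * g) μ)
    (hg : Integrable g μ) {s : Set Ω} (hs : MeasurableSet[m] s) :
    ∫ ω in s, f ω * μ[g | m] ω ∂μ = ∫ ω in s, f ω * g ω ∂μ := by
  refine (setIntegral_congr_ae (hm s hs) ?_).trans (setIntegral_condExp hm hfg hs)
  exact (condExp_mul_of_stronglyMeasurable_left hf hfg hg).mono fun ω h _ => h.symm

theorem integral_mul_condExp_of_stronglyMeasurable (hm : m ≤ mΩ) [SigmaFinite (μ.trim hm)]
    {f g : Ω → ℝ} (hf : StronglyMeasurable[m] f) (hfg : Integrable (f * g) μ)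
    (hg : Integrable g μ) :
    ∫ ω, f ω * μ[g | m] ω ∂μ = ∫ ω, f ω * g ω ∂μ := by
  simpa only [Measure.restrict_univ] using
    setIntegral_mul_condExp_of_stronglyMeasurable hm hf hfg hg MeasurableSet.univ

variable [IsFiniteMeasure μ]

theorem integral_mul_sub_condExp_eq_zero (hm : m ≤ mΩ) {f g : Ω → ℝ} {c : ℝ}
    (hf : StronglyMeasurable[m] f) (hf_bdd : ∀ᵐ ω ∂μ, ‖f ω‖ ≤ c) (hg : Integrable g μ) :
    ∫ ω, f ω * (g ω - μ[g | m] ω) ∂μ = 0 := by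
  have hf' : AEStronglyMeasurable f μ := (hf.mono hm).aestronglyMeasurable
  have hfg : Integrable (fun ω => f ω * g ω) μ := hg.bdd_mul hf' hf_bdd
  simp_rw [mul_sub]
  rw [integral_sub hfg (integrable_condExp.bdd_mul hf' hf_bdd),
    integral_mul_condExp_of_stronglyMeasurable hm hf hfg hg, sub_self]

theorem integral_mul_sub_condExp_add_one_sub_mul_sub_condExp_eq_zero {m₁ m₂ : MeasurableSpace Ω}
    (h₁₂ : m₁ ≤ m₂) (h₂ : m₂ ≤ mΩ) {f g : Ω → ℝ} {c : ℝ} (hf : StronglyMeasurable[m₁] f)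
    (hf_bdd : ∀ᵐ ω ∂μ, ‖f ω‖ ≤ c) (hg : Integrable g μ) :
    ∫ ω, (f ω * (g ω - μ[g | m₁] ω) + (1 - f ω) * (μ[g | m₁] ω - μ[g | m₂] ω)) ∂μ = 0 := by
  have h_one_sub : StronglyMeasurable[m₂] (fun ω => 1 - f ω) :=
    stronglyMeasurable_const.sub (hf.mono h₁₂)
  have h_two_mul : StronglyMeasurable[m₁] (fun ω => 2 * f ω - 1) :=
    (stronglyMeasurable_const.mul hf).sub stronglyMeasurable_const
  have h_one_sub_bdd : ∀ᵐ ω ∂μ, ‖1 - f ω‖ ≤ 1 + c := hf_bdd.mono fun ω h => by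
    rw [Real.norm_eq_abs, abs_le] at h ⊢
    constructor <;> linarith [h.1, h.2]
  have h_two_mul_bdd : ∀ᵐ ω ∂μ, ‖2 * f ω - 1‖ ≤ 2 * c + 1 := hf_bdd.mono fun ω h => by
    rw [Real.norm_eq_abs, abs_le] at h ⊢
    constructor <;> linarith [h.1, h.2]
  calc _ = ∫ ω, ((1 - f ω) * (g ω - μ[g | m₂] ω) + (2 * f ω - 1) * (g ω - μ[g | m₁] ω)) ∂μ :=
        integral_congr_ae (Filter.Eventually.of_forall fun ω => by ring)
    _ = 0 := by
      rw [integral_add, integral_mul_sub_condExp_eq_zero h₂ h_one_sub h_one_sub_bdd hg,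
        integral_mul_sub_condExp_eq_zero (h₁₂.trans h₂) h_two_mul h_two_mul_bdd hg, add_zero]
      · exact (hg.sub integrable_condExp).bdd_mul
          (h_one_sub.mono h₂).aestronglyMeasurable h_one_sub_bdd
      · exact (hg.sub integrable_condExp).bdd_mul
          (h_two_mul.mono (h₁₂.trans h₂)).aestronglyMeasurable h_two_mul_bdd

theorem integral_mul_add_one_sub_mul_condExp (hm : m ≤ mΩ) {r h₀ h₁ : Ω → ℝ} {c : ℝ}
    (hr : AEStronglyMeasurable r μ) (hr_bdd : ∀ᵐ ω ∂μ, ‖r ω‖ ≤ c)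
    (hh₀ : StronglyMeasurable[m] h₀) (hh₁ : StronglyMeasurable[m] h₁)
    (hh₀_int : Integrable h₀ μ) (hh₁_int : Integrable h₁ μ) :
    ∫ ω, (r ω * h₁ ω + (1 - r ω) * h₀ ω) ∂μ
      = ∫ ω, (μ[r | m] ω * h₁ ω + (1 - μ[r | m] ω) * h₀ ω) ∂μ := by
  have hr_int : Integrable r μ := (integrable_const c).mono' hr hr_bdd
  have hcondExp_bdd : ∀ᵐ ω ∂μ, ‖μ[r | m] ω‖ ≤ c := by
    simpa only [Real.norm_eq_abs] using ae_bdd_abs_condExp_of_ae_bdd_abs (m := m) hr_bdd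
  have h_diff := hh₁_int.sub hh₀_int
  have h_pull : ∫ ω, (h₁ - h₀) ω * μ[r | m] ω ∂μ = ∫ ω, (h₁ - h₀) ω * r ω ∂μ :=
    integral_mul_condExp_of_stronglyMeasurable hm (hh₁.sub hh₀) (h_diff.mul_bdd hr hr_bdd) hr_int
  calc _ = ∫ ω, (h₀ ω + (h₁ - h₀) ω * r ω) ∂μ :=
        integral_congr_ae (Filter.Eventually.of_forall fun ω => by simp only [Pi.sub_apply]; ring)
    _ = ∫ ω, (h₀ ω + (h₁ - h₀) ω * μ[r | m] ω) ∂μ := by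
      rw [integral_add hh₀_int (h_diff.mul_bdd hr hr_bdd),
        integral_add hh₀_int (h_diff.mul_bdd integrable_condExp.aestronglyMeasurable hcondExp_bdd),
        h_pull]
    _ = _ :=
      integral_congr_ae (Filter.Eventually.of_forall fun ω => by simp only [Pi.sub_apply]; ring)

end CondExp

section CondIndep

variable {Ω : Type*} {m mΩ : MeasurableSpace Ω} [StandardBorelSpace Ω] {μ : Measure Ω}
  [IsFiniteMeasure μ]

theorem setIntegral_inter_condExp_indicator_of_condIndepSet (hm : m ≤ mΩ) {s t a : Set Ω}
    (hs : MeasurableSet s) (ht : MeasurableSet t) (ha : MeasurableSet[m] a)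
    (h : CondIndepSet m hm s t μ) :
    ∫ ω in a ∩ t, (μ⟦s | m⟧) ω ∂μ = ∫ ω in a ∩ t, s.indicator (fun _ => (1 : ℝ)) ω ∂μ := by
  have h_mul := (condIndepSet_iff m hm s t hs ht μ).1 h
  have h_ind : t.indicator (μ⟦s | m⟧) = μ⟦s | m⟧ * t.indicator fun _ => (1 : ℝ) := by
    ext ω
    by_cases hω : ω ∈ t <;> simp [hω]
  have h_int : Integrable (μ⟦s | m⟧ * t.indicator fun _ => (1 : ℝ)) μ := by
    rw [← h_ind]
    exact integrable_condExp.indicator ht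
  calc ∫ ω in a ∩ t, (μ⟦s | m⟧) ω ∂μ = ∫ ω in a, t.indicator (μ⟦s | m⟧) ω ∂μ :=
        (setIntegral_indicator ht).symm
    _ = ∫ ω in a, (μ⟦s | m⟧) ω * (μ⟦t | m⟧) ω ∂μ := by
      rw [h_ind]
      exact (setIntegral_mul_condExp_of_stronglyMeasurable hm stronglyMeasurable_condExp h_int
        ((integrable_const 1).indicator ht) ha).symm
    _ = ∫ ω in a, (μ⟦s ∩ t | m⟧) ω ∂μ :=
        setIntegral_congr_ae (hm a ha) (h_mul.mono fun ω h _ => h.symm)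
    _ = ∫ ω in a, (s ∩ t).indicator (fun _ => (1 : ℝ)) ω ∂μ :=
        setIntegral_condExp hm ((integrable_const 1).indicator (hs.inter ht)) ha
    _ = ∫ ω in a ∩ t, s.indicator (fun _ => (1 : ℝ)) ω ∂μ := by
      rw [← setIntegral_indicator ht, Set.indicator_indicator, Set.inter_comm]

variable {𝒱 𝒲 β : Type*} [m𝒱 : MeasurableSpace 𝒱] [MeasurableSpace 𝒲] [MeasurableSpace β]
  {V : Ω → 𝒱} {W : Ω → 𝒲}

theorem condExp_indicator_comap_prodMk_ae_eq_of_condIndepFun (hV : Measurable V)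
    (hW : Measurable W) {X : Ω → β} (hX : Measurable X)
    (h : CondIndepFun (MeasurableSpace.comap V m𝒱) hV.comap_le X W μ) {s : Set β}
    (hs : MeasurableSet s) :
    μ⟦X ⁻¹' s | MeasurableSpace.comap (fun ω => (V ω, W ω)) inferInstance⟧
      =ᵐ[μ] μ⟦X ⁻¹' s | MeasurableSpace.comap V m𝒱⟧ := by
  have hVW : MeasurableSpace.comap (fun ω => (V ω, W ω)) inferInstance ≤ mΩ :=
    (hV.prodMk hW).comap_le
  have hV_le : MeasurableSpace.comap V m𝒱
      ≤ MeasurableSpace.comap (fun ω => (V ω, W ω)) inferInstance :=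
    (measurable_fst.comp (comap_measurable (fun ω => (V ω, W ω)))).comap_le
  have h_gen : MeasurableSpace.comap (fun ω => (V ω, W ω)) inferInstance
      = MeasurableSpace.generateFrom (Set.preimage (fun ω => (V ω, W ω)) ''
          Set.image2 (· ×ˢ ·) {a : Set 𝒱 | MeasurableSet a} {b : Set 𝒲 | MeasurableSet b}) := by
    rw [← MeasurableSpace.comap_generateFrom, generateFrom_prod]
  have h_int : Integrable ((X ⁻¹' s).indicator fun _ => (1 : ℝ)) μ :=
    (integrable_const 1).indicator (hX hs)
  refine (ae_eq_condExp_of_forall_setIntegral_eq hVW h_int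
    (fun _ _ _ => integrable_condExp.integrableOn) (fun t ht _ => ?_)
    (stronglyMeasurable_condExp.mono hV_le).aestronglyMeasurable).symm
  refine setIntegral_eq_of_isPiSystem hVW h_gen (isPiSystem_prod.comap _) integrable_condExp h_int
    (integral_condExp hV.comap_le) ?_ ht
  rintro _ ⟨_, ⟨a, ha, b, hb, rfl⟩, rfl⟩
  rw [Set.mk_preimage_prod]
  exact setIntegral_inter_condExp_indicator_of_condIndepSet hV.comap_le (hX hs) (hW hb) ⟨a, ha, rfl⟩
    ((condIndepFun_iff_condIndepSet_preimage hX hW).1 h s b hs hb)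

theorem condExp_comap_prodMk_ae_eq_of_condIndepFun (hV : Measurable V) (hW : Measurable W)
    {R : Ω → ℝ} (hR : Measurable R) (hR01 : ∀ ω, R ω = 0 ∨ R ω = 1)
    (h : CondIndepFun (MeasurableSpace.comap V m𝒱) hV.comap_le R W μ) :
    μ[R | MeasurableSpace.comap (fun ω => (V ω, W ω)) inferInstance]
      =ᵐ[μ] μ[R | MeasurableSpace.comap V m𝒱] := by
  have hR_ind : R = (R ⁻¹' {1}).indicator fun _ => 1 := by
    ext ω
    rcases hR01 ω with h | h <;> simp [h]
  rw [hR_ind]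
  exact condExp_indicator_comap_prodMk_ae_eq_of_condIndepFun hV hW hR h (measurableSet_singleton 1)

end CondIndep

theorem imputation_estimating_function_unbiased_general
    {Ω : Type*} {mΩ : MeasurableSpace Ω} [StandardBorelSpace Ω]
    {P : Measure Ω} [IsProbabilityMeasure P]
    {𝒱 𝓛 𝒴 : Type*} [m𝒱 : MeasurableSpace 𝒱] [m𝓛 : MeasurableSpace 𝓛]
    [m𝒴 : MeasurableSpace 𝒴]
    (V : Ω → 𝒱) (L : Ω → 𝓛) (Y : Ω → 𝒴)
    (hV : Measurable V) (hL : Measurable L) (hY : Measurable Y)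
    (R : Ω → ℝ) (hR : Measurable R) (hR01 : ∀ ω, R ω = 0 ∨ R ω = 1)
    -- ignorability: `R ⟂ (Y, L) | σ(V)`
    (hign : CondIndepFun (MeasurableSpace.comap V m𝒱) (hV.comap_le) R
      (fun ω => (Y ω, L ω)) P)
    (g : 𝒴 × 𝒱 → ℝ) (hg : Measurable g)
    (hgint : Integrable (fun ω => g (Y ω, V ω)) P) :
    ∫ ω, (R ω * (g (Y ω, V ω)
            - (P[fun ω' => g (Y ω', V ω') | MeasurableSpace.comap V m𝒱]) ω)
        + (1 - R ω)
          * ((P[fun ω' => g (Y ω', V ω') | MeasurableSpace.comap V m𝒱]) ω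
            - (P[fun ω' => g (Y ω', V ω')
                | MeasurableSpace.comap (fun ω' => (V ω', L ω')) inferInstance]) ω)) ∂P
      = 0 := by
  set mV := MeasurableSpace.comap V m𝒱
  set mVL := MeasurableSpace.comap (fun ω => (V ω, L ω)) inferInstance
  set U : Ω → 𝒱 × 𝒴 × 𝓛 := fun ω => (V ω, Y ω, L ω)
  set mU := MeasurableSpace.comap U inferInstance
  have hU : Measurable[mU] U := comap_measurable U
  have hVL_le : mVL ≤ mU :=
    ((measurable_fst.comp hU).prodMk (measurable_snd.comp (measurable_snd.comp hU))).comap_le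
  have hV_le : mV ≤ mVL := (measurable_fst.comp (comap_measurable (fun ω => (V ω, L ω)))).comap_le
  have hg_meas : StronglyMeasurable[mU] (fun ω => g (Y ω, V ω)) :=
    (hg.comp ((measurable_fst.comp (measurable_snd.comp hU)).prodMk
      (measurable_fst.comp hU))).stronglyMeasurable
  have hR_bdd : ∀ ω, ‖R ω‖ ≤ 1 := fun ω => by rcases hR01 ω with h | h <;> simp [h]
  have hcondExp_bdd : ∀ᵐ ω ∂P, ‖P[R | mV] ω‖ ≤ 1 := by
    simpa only [Real.norm_eq_abs] using
      ae_bdd_abs_condExp_of_ae_bdd_abs (m := mV) (Filter.Eventually.of_forall hR_bdd)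
  have hR_condExp : P[R | mU] =ᵐ[P] P[R | mV] :=
    condExp_comap_prodMk_ae_eq_of_condIndepFun hV (hY.prodMk hL) hR hR01 hign
  refine (integral_mul_add_one_sub_mul_condExp (m := mU) (hV.prodMk (hY.prodMk hL)).comap_le
    hR.aestronglyMeasurable (Filter.Eventually.of_forall hR_bdd)
    ((stronglyMeasurable_condExp.mono (hV_le.trans hVL_le)).sub
      (stronglyMeasurable_condExp.mono hVL_le))
    (hg_meas.sub (stronglyMeasurable_condExp.mono (hV_le.trans hVL_le)))
    (integrable_condExp.sub integrable_condExp) (hgint.sub integrable_condExp)).trans ?_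
  refine (integral_congr_ae (hR_condExp.mono fun ω h => ?_)).trans
    (integral_mul_sub_condExp_add_one_sub_mul_sub_condExp_eq_zero hV_le (hV.prodMk hL).comap_le
      stronglyMeasurable_condExp hcondExp_bdd hgint)
  simp only [Pi.sub_apply, h]

/-- **Corollary 1.** Unbiasedness of the imputation-based estimating function:
`E[R (g(Y,V) − E[g(Y,V)|V]) + (1 − R) (E[g(Y,V)|V] − E[g(Y,V)|V,L])] = 0`. -/
theorem imputation_estimating_function_unbiased
    {Ω : Type*} {mΩ : MeasurableSpace Ω} [StandardBorelSpace Ω] [Nonempty Ω]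
    {P : Measure Ω} [IsProbabilityMeasure P]
    {𝒱 𝓛 𝒴 : Type*} [m𝒱 : MeasurableSpace 𝒱] [m𝓛 : MeasurableSpace 𝓛]
    [m𝒴 : MeasurableSpace 𝒴]
    (V : Ω → 𝒱) (L : Ω → 𝓛) (Y : Ω → 𝒴)
    (hV : Measurable V) (hL : Measurable L) (hY : Measurable Y)
    (R : Ω → ℝ) (hR : Measurable R) (hR01 : ∀ ω, R ω = 0 ∨ R ω = 1)
    (π : 𝒱 → ℝ) (hπ : Measurable π)
    -- `π(V)` is a version of `E[R | σ(V)]`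
    (hπV : P[R | MeasurableSpace.comap V m𝒱] =ᵐ[P] fun ω => π (V ω))
    -- positivity
    (δ : ℝ) (hδ0 : 0 < δ) (hδhalf : δ < 1 / 2)
    (hpos : ∀ᵐ ω ∂P, δ ≤ π (V ω) ∧ π (V ω) ≤ 1 - δ)
    -- ignorability: `R ⟂ (Y, L) | σ(V)`
    (hign : CondIndepFun (MeasurableSpace.comap V m𝒱) (hV.comap_le) R
      (fun ω => (Y ω, L ω)) P)
    (g : 𝒴 × 𝒱 → ℝ) (hg : Measurable g)
    (hgint : Integrable (fun ω => g (Y ω, V ω)) P) :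
    ∫ ω, (R ω * (g (Y ω, V ω)
            - (P[fun ω' => g (Y ω', V ω') | MeasurableSpace.comap V m𝒱]) ω)
        + (1 - R ω)
          * ((P[fun ω' => g (Y ω', V ω') | MeasurableSpace.comap V m𝒱]) ω
            - (P[fun ω' => g (Y ω', V ω')
                | MeasurableSpace.comap (fun ω' => (V ω', L ω')) inferInstance]) ω)) ∂P
      = 0 :=
  imputation_estimating_function_unbiased_general (mΩ := mΩ) (m𝒱 := m𝒱) (m𝓛 := m𝓛) (m𝒴 := m𝒴) V L Y
    hV hL hY R hR hR01 hign g hg hgint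
end

section
/- (Lemma S1.) Suppose the efficiency setup holds and h̃ is an admissible index function such that for every admissible index function h, −E[h(V) Dᵀ] = E[M² h(V) h̃(V)ᵀ] as p×p matrices. Then for every admissible index function h such that E[h(V) Dᵀ] and E[M² h̃(V) h̃(V)ᵀ] are invertible, the difference of asymptotic variances E[h(V) Dᵀ]⁻¹ · E[M² h(V) h(V)ᵀ] · (E[h(V) Dᵀ]⁻¹)ᵀ − E[M² h̃(V) h̃(V)ᵀ]⁻¹ is positive semidefinite; that is, the estimator indexed by h̃ is most efficient. -/
/-!
Put `X = M h(V)` and `Y = -M h̃(V)`. The optimality condition makes `A = E[h(V) Dᵀ]` equal to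
`E[X Yᵀ]`, so with `B = E[X Xᵀ]` and `S = E[Y Yᵀ]` the block matrix `[[B, A], [Aᵀ, S]]` is the
second-moment matrix of `(X, Y)`, hence positive semidefinite. As `S` is invertible it is positive
definite, and the Schur complement `B - A S⁻¹ Aᵀ` is positive semidefinite; conjugating it by `A⁻¹`
gives `A⁻¹ B A⁻ᵀ - S⁻¹`.
-/

open MeasureTheory Matrix

theorem Matrix.PosSemidef.inv_mul_mul_conjTranspose_inv_sub_inv
    {n 𝕜 : Type*} [Fintype n] [DecidableEq n] [Field 𝕜] [PartialOrder 𝕜] [StarRing 𝕜]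
    [StarOrderedRing 𝕜] {A B S : Matrix n n 𝕜} (h : (fromBlocks B A Aᴴ S).PosSemidef)
    (hA : IsUnit A) (hS : S.PosDef) :
    (A⁻¹ * B * A⁻¹ᴴ - S⁻¹).PosSemidef := by
  have := hS.isUnit.invertible
  have hschur : (B - A * S⁻¹ * Aᴴ).PosSemidef := (PosDef.fromBlocks₂₂ B A hS).mp h
  have hA' : A⁻¹ * A = 1 := nonsing_inv_mul A ((isUnit_iff_isUnit_det A).mp hA)
  convert hschur.mul_mul_conjTranspose_same A⁻¹ using 1
  simp only [Matrix.mul_sub, Matrix.sub_mul, ← Matrix.mul_assoc, hA', Matrix.one_mul]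
  rw [Matrix.mul_assoc _ Aᴴ, ← conjTranspose_mul, hA', conjTranspose_one, Matrix.mul_one]

section CrossMoment

variable {Ω ι κ : Type*} [MeasurableSpace Ω]

noncomputable def crossMoment (P : Measure Ω) (X : Ω → ι → ℝ) (Y : Ω → κ → ℝ) : Matrix ι κ ℝ :=
  of fun i j => ∫ ω, X ω i * Y ω j ∂P

variable {P : Measure Ω}

theorem conjTranspose_crossMoment (X : Ω → ι → ℝ) (Y : Ω → κ → ℝ) :
    (crossMoment P X Y)ᴴ = crossMoment P Y X := by
  ext i j
  simp only [crossMoment, conjTranspose_apply, of_apply, star_trivial, mul_comm]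

theorem crossMoment_sumElim {ι' : Type*} (X : Ω → ι → ℝ) (Y : Ω → ι' → ℝ) :
    crossMoment P (fun ω => Sum.elim (X ω) (Y ω)) (fun ω => Sum.elim (X ω) (Y ω)) =
      fromBlocks (crossMoment P X X) (crossMoment P X Y) (crossMoment P Y X)
        (crossMoment P Y Y) := by
  ext (i | i) (j | j) <;> rfl

theorem posSemidef_crossMoment_self [Finite ι] {X : Ω → ι → ℝ}
    (hX : ∀ i, MemLp (fun ω => X ω i) 2 P) : (crossMoment P X X).PosSemidef := by
  suffices crossMoment P X X = gram ℝ fun i => (hX i).toLp from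
    this ▸ posSemidef_gram ℝ _
  ext i j
  rw [gram_apply, L2.inner_def, crossMoment, of_apply]
  refine integral_congr_ae ?_
  filter_upwards [(hX i).coeFn_toLp, (hX j).coeFn_toLp] with ω hi hj
  simp [hi, hj, mul_comm]

end CrossMoment

theorem memLp_two_mul_comp_of_bounded {Ω 𝒱 ι : Type*} [MeasurableSpace Ω] [MeasurableSpace 𝒱]
    [Fintype ι] {P : Measure Ω} {V : Ω → 𝒱} (hV : Measurable V) {M : Ω → ℝ} (hM : MemLp M 2 P)
    {g : 𝒱 → ι → ℝ} (hg : Measurable g) {C : ℝ} (hC : ∀ v, ‖g v‖ ≤ C) (i : ι) :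
    MemLp (fun ω => g (V ω) i * M ω) 2 P :=
  hM.mul' <| memLp_top_of_bound ((measurable_pi_apply i).comp (hg.comp hV)).aestronglyMeasurable
    C (ae_of_all _ fun _ => (norm_le_pi_norm _ i).trans (hC _))

theorem lemma_S1_efficiency_general
    {Ω : Type*} [MeasurableSpace Ω] {P : Measure Ω}
    {𝒱 : Type*} [MeasurableSpace 𝒱]
    (V : Ω → 𝒱) (hV : Measurable V)
    (p : ℕ)
    (M : Ω → ℝ) (hM2 : MemLp M 2 P)
    (D : Ω → Fin p → ℝ)
    (ht : 𝒱 → Fin p → ℝ) (hht : Measurable ht)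
    (Ct : ℝ) (htbdd : ∀ v, ‖ht v‖ ≤ Ct)
    -- `−E[h(V) Dᵀ] = E[M² h(V) h̃(V)ᵀ]` for every admissible index function `h`
    (hopt : ∀ (h : 𝒱 → Fin p → ℝ), Measurable h → (∃ C : ℝ, ∀ v, ‖h v‖ ≤ C) →
      ∀ i j, -∫ ω, h (V ω) i * D ω j ∂P = ∫ ω, (M ω) ^ 2 * (h (V ω) i * ht (V ω) j) ∂P) :
    ∀ (h : 𝒱 → Fin p → ℝ), Measurable h → (∃ C : ℝ, ∀ v, ‖h v‖ ≤ C) →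
      IsUnit (Matrix.of fun i j => ∫ ω, h (V ω) i * D ω j ∂P : Matrix (Fin p) (Fin p) ℝ).det →
      IsUnit (Matrix.of fun i j => ∫ ω, (M ω) ^ 2 * (ht (V ω) i * ht (V ω) j) ∂P :
        Matrix (Fin p) (Fin p) ℝ).det →
      ((Matrix.of fun i j => ∫ ω, h (V ω) i * D ω j ∂P : Matrix (Fin p) (Fin p) ℝ)⁻¹
          * (Matrix.of fun i j => ∫ ω, (M ω) ^ 2 * (h (V ω) i * h (V ω) j) ∂P)
          * ((Matrix.of fun i j => ∫ ω, h (V ω) i * D ω j ∂P :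
              Matrix (Fin p) (Fin p) ℝ)⁻¹)ᵀ
        - (Matrix.of fun i j => ∫ ω, (M ω) ^ 2 * (ht (V ω) i * ht (V ω) j) ∂P :
            Matrix (Fin p) (Fin p) ℝ)⁻¹).PosSemidef := by
  rintro h hh ⟨C, hC⟩ hA hS
  set X : Ω → Fin p → ℝ := fun ω i => h (V ω) i * M ω
  set Y : Ω → Fin p → ℝ := fun ω i => -(ht (V ω) i * M ω)
  have hX : ∀ i, MemLp (fun ω => X ω i) 2 P := memLp_two_mul_comp_of_bounded hV hM2 hh hC
  have hY : ∀ i, MemLp (fun ω => Y ω i) 2 P :=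
    fun i => (memLp_two_mul_comp_of_bounded hV hM2 hht htbdd i).neg
  have hBX : (of fun i j => ∫ ω, M ω ^ 2 * (h (V ω) i * h (V ω) j) ∂P) = crossMoment P X X := by
    ext i j
    exact integral_congr_ae (ae_of_all _ fun ω => by simp only [X]; ring)
  have hSY : (of fun i j => ∫ ω, M ω ^ 2 * (ht (V ω) i * ht (V ω) j) ∂P) = crossMoment P Y Y := by
    ext i j
    exact integral_congr_ae (ae_of_all _ fun ω => by simp only [Y]; ring)
  have hAXY : (of fun i j => ∫ ω, h (V ω) i * D ω j ∂P) = crossMoment P X Y := by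
    ext i j
    rw [of_apply, ← neg_neg (∫ ω, _ ∂P), hopt h hh ⟨C, hC⟩ i j, crossMoment, of_apply,
      ← integral_neg]
    exact integral_congr_ae (ae_of_all _ fun ω => by simp only [X, Y]; ring)
  rw [hAXY] at hA ⊢
  rw [hSY] at hS ⊢
  rw [hBX]
  have hSpos : (crossMoment P Y Y).PosDef :=
    (posSemidef_crossMoment_self hY).posDef_iff_isUnit.mpr ((isUnit_iff_isUnit_det _).mpr hS)
  have hblock := posSemidef_crossMoment_self (X := fun ω => Sum.elim (X ω) (Y ω))
    (by rintro (i | i); exacts [hX i, hY i])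
  rw [crossMoment_sumElim, ← conjTranspose_crossMoment X Y] at hblock
  simpa only [conjTranspose_eq_transpose_of_trivial] using
    hblock.inv_mul_mul_conjTranspose_inv_sub_inv ((isUnit_iff_isUnit_det _).mpr hA) hSpos

/-- **Lemma S1.** If `h̃` is an admissible (bounded measurable) index function
such that `−E[h(V) Dᵀ] = E[M² h(V) h̃(V)ᵀ]` for every admissible index function `h`, then for
every admissible `h` (with the relevant matrices invertible) the difference of asymptotic
variances
`E[h(V) Dᵀ]⁻¹ E[M² h(V) h(V)ᵀ] (E[h(V) Dᵀ]⁻¹)ᵀ − E[M² h̃(V) h̃(V)ᵀ]⁻¹`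
is positive semidefinite, i.e. the estimator indexed by `h̃` is most efficient. -/
theorem lemma_S1_efficiency
    {Ω : Type*} [MeasurableSpace Ω] {P : Measure Ω} [IsProbabilityMeasure P]
    {𝒱 : Type*} [MeasurableSpace 𝒱]
    (V : Ω → 𝒱) (hV : Measurable V)
    (p : ℕ)
    (M : Ω → ℝ) (hM : Measurable M) (hM2 : MemLp M 2 P)
    (D : Ω → Fin p → ℝ) (hD : Measurable D)
    (hD2 : ∀ i, MemLp (fun ω => D ω i) 2 P)
    (ht : 𝒱 → Fin p → ℝ) (hht : Measurable ht)
    (Ct : ℝ) (htbdd : ∀ v, ‖ht v‖ ≤ Ct)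
    -- `−E[h(V) Dᵀ] = E[M² h(V) h̃(V)ᵀ]` for every admissible index function `h`
    (hopt : ∀ (h : 𝒱 → Fin p → ℝ), Measurable h → (∃ C : ℝ, ∀ v, ‖h v‖ ≤ C) →
      ∀ i j, -∫ ω, h (V ω) i * D ω j ∂P = ∫ ω, (M ω) ^ 2 * (h (V ω) i * ht (V ω) j) ∂P) :
    ∀ (h : 𝒱 → Fin p → ℝ), Measurable h → (∃ C : ℝ, ∀ v, ‖h v‖ ≤ C) →
      IsUnit (Matrix.of fun i j => ∫ ω, h (V ω) i * D ω j ∂P : Matrix (Fin p) (Fin p) ℝ).det →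
      IsUnit (Matrix.of fun i j => ∫ ω, (M ω) ^ 2 * (ht (V ω) i * ht (V ω) j) ∂P :
        Matrix (Fin p) (Fin p) ℝ).det →
      ((Matrix.of fun i j => ∫ ω, h (V ω) i * D ω j ∂P : Matrix (Fin p) (Fin p) ℝ)⁻¹
          * (Matrix.of fun i j => ∫ ω, (M ω) ^ 2 * (h (V ω) i * h (V ω) j) ∂P)
          * ((Matrix.of fun i j => ∫ ω, h (V ω) i * D ω j ∂P :
              Matrix (Fin p) (Fin p) ℝ)⁻¹)ᵀ
        - (Matrix.of fun i j => ∫ ω, (M ω) ^ 2 * (ht (V ω) i * ht (V ω) j) ∂P :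
            Matrix (Fin p) (Fin p) ℝ)⁻¹).PosSemidef :=
  lemma_S1_efficiency_general V hV p M hM2 D ht hht Ct htbdd hopt
end
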